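/- Let R be a unital involutive algebra, and let F ∈ R with F² = 1. Suppose 1 + (1/4)(F − F*)(F* − F) is invertible with inverse T, and set F̃ = ((1/4)(FF* − F*F) + (1/2)(F + F*)) T. Define F_t = (1 + (t/2)(F − F̃)) F (1 + (t/2)(F̃ − F)) for t ∈ ℝ. Then F_t² = 1 for all t, F_0 = F, and F_1 = F̃. Moreover if F is selfadjoint then F_t = F for all t. -/

import Mathlib

/-!
Write `F̃ = N T` with `T = Z⁻¹`. Using only `F² = F⋆² = 1`, `Z = ½ + ¼(FF⋆ + F⋆F)` commutes with `F`
and `F⋆`, hence with `N` and `T`, and `FN = Z − FZ + N`, `NF = Z + FZ − N`, `N² = Z²`. Multiplying by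
`T` gives `F̃² = 1`, `FF̃ = 1 − F + F̃`, `F̃F = 1 + F − F̃` (for `e = (1 + F)/2`, `p = (1 + F̃)/2` these
read `p² = p`, `ep = p`, `pe = e`). So `D = F − F̃` satisfies `FD = D`, `DF = −D`, `D² = 0`, whence
`F_t = F − tD` and `F_t² = 1 − t(FD + DF) + t²D² = 1`. If `F⋆ = F` then `Z = 1` and `F̃ = F`.
-/

variable {R : Type*} [Ring R] [Algebra ℂ R] [StarRing R] [StarModule ℂ R]

/-- The canonical selfadjoint replacement F̃ = (¼(FF*−F*F) + ½(F+F*))T of F,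
where T is the inverse of 1 + ¼(F−F*)(F*−F). -/
noncomputable def tildeF (F T : R) : R :=
  ((1 / 4 : ℂ) • (F * star F - star F * F) + (1 / 2 : ℂ) • (F + star F)) * T

/-- The path F_t = (1 + (t/2)(F−F̃)) F (1 + (t/2)(F̃−F)). -/
noncomputable def pathF (F T : R) (t : ℝ) : R :=
  (1 + ((t : ℂ) / 2) • (F - tildeF F T)) * F * (1 + ((t : ℂ) / 2) • (tildeF F T - F))

section NilpotentConjugation

variable {k A : Type*} [CommRing k] [Ring A] [Algebra k A] {F D : A}

theorem one_add_smul_mul_mul_one_sub_smul (hFD : F * D = D) (hDF : D * F = -D) (hD : D * D = 0)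
    (c : k) : (1 + c • D) * F * (1 - c • D) = F - (2 * c) • D := by
  simp only [add_mul, mul_sub, one_mul, mul_one, smul_mul_assoc, mul_smul_comm, hFD, hDF,
    neg_mul, hD]
  module

theorem sub_smul_mul_self_eq_one (hF : F * F = 1) (hFD : F * D = D) (hDF : D * F = -D)
    (hD : D * D = 0) (c : k) : (F - c • D) * (F - c • D) = 1 := by
  simp only [sub_mul, mul_sub, smul_mul_assoc, mul_smul_comm, hF, hFD, hDF, hD, smul_zero]
  module

end NilpotentConjugation

section InvolutionPair

variable {A : Type*} [Ring A] {F G : A}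

theorem mul_sub_of_mul_eq (hF : F * F = 1) (hFG : F * G = 1 - F + G) :
    F * (F - G) = F - G := by
  rw [mul_sub, hF, hFG]
  abel

theorem sub_mul_of_mul_eq (hF : F * F = 1) (hGF : G * F = 1 + F - G) :
    (F - G) * F = -(F - G) := by
  rw [sub_mul, hF, hGF]
  abel

theorem sub_mul_self_of_mul_eq (hF : F * F = 1) (hG : G * G = 1) (hFG : F * G = 1 - F + G)
    (hGF : G * F = 1 + F - G) : (F - G) * (F - G) = 0 := by
  rw [sub_mul, mul_sub, mul_sub, hF, hG, hFG, hGF]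
  abel

end InvolutionPair

section Replacement

variable (k : Type*) {A : Type*} [Field k] [Ring A] [Algebra k A]

-- `F̃ = N Z⁻¹` with `N = replacementNum ℂ F F⋆` and `Z = replacementDen ℂ F F⋆`.
def replacementNum (F S : A) : A := (1 / 4 : k) • (F * S - S * F) + (1 / 2 : k) • (F + S)

def replacementDen (F S : A) : A := 1 + (1 / 4 : k) • ((F - S) * (S - F))

variable {k} {F S T : A}

theorem replacementDen_swap (F S : A) : replacementDen k S F = replacementDen k F S := by
  rw [replacementDen, replacementDen, ← neg_sub F S, ← neg_sub S F, neg_mul_neg, neg_sub, neg_sub]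

private theorem mul_mul_cancel_left_of_mul_self {X : A} (hX : X * X = 1) (x : A) :
    X * (X * x) = x := by
  rw [← mul_assoc, hX, one_mul]

variable [CharZero k]

section Identities

variable (hF : F * F = 1) (hS : S * S = 1)
include hF hS

theorem commute_replacementDen_left : Commute (replacementDen k F S) F := by
  simp only [Commute, SemiconjBy, replacementDen, add_mul, mul_add, sub_mul, mul_sub,
    smul_mul_assoc, mul_smul_comm, mul_assoc, one_mul, mul_one, hF, hS,
    mul_mul_cancel_left_of_mul_self hF]
  module

-- `N` is a polynomial in `F` and `S`, both of which commute with `Z`.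
theorem commute_replacementDen_num : Commute (replacementDen k F S) (replacementNum k F S) := by
  have hZF : Commute (replacementDen k F S) F := commute_replacementDen_left hF hS
  have hZS : Commute (replacementDen k F S) S := by
    simpa only [replacementDen_swap] using commute_replacementDen_left (k := k) hS hF
  unfold replacementNum
  exact (((hZF.mul_right hZS).sub_right (hZS.mul_right hZF)).smul_right _).add_right
    ((hZF.add_right hZS).smul_right _)

theorem mul_replacementNum :
    F * replacementNum k F S = replacementDen k F S - F * replacementDen k F S +
      replacementNum k F S := by
  simp only [replacementNum, replacementDen, mul_add, sub_mul, mul_sub, mul_smul_comm, smul_add,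
    smul_sub, mul_one, hF, hS, mul_mul_cancel_left_of_mul_self hF]
  module

theorem replacementNum_mul :
    replacementNum k F S * F = replacementDen k F S + F * replacementDen k F S -
      replacementNum k F S := by
  simp only [replacementNum, replacementDen, add_mul, mul_add, sub_mul, mul_sub, smul_mul_assoc,
    mul_smul_comm, smul_add, smul_sub, mul_assoc, mul_one, hF, hS,
    mul_mul_cancel_left_of_mul_self hF]
  module

theorem replacementNum_mul_self :
    replacementNum k F S * replacementNum k F S = replacementDen k F S * replacementDen k F S := by
  simp only [replacementNum, replacementDen, add_mul, mul_add, sub_mul, mul_sub, smul_mul_assoc,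
    mul_smul_comm, smul_add, smul_sub, mul_assoc, one_mul, mul_one, hF, hS,
    mul_mul_cancel_left_of_mul_self hF, mul_mul_cancel_left_of_mul_self hS]
  module

end Identities

theorem mul_replacementNum_mul (hF : F * F = 1) (hS : S * S = 1)
    (hZT : replacementDen k F S * T = 1) :
    F * (replacementNum k F S * T) = 1 - F + replacementNum k F S * T := by
  rw [← mul_assoc, mul_replacementNum hF hS, add_mul, sub_mul, hZT, mul_assoc, hZT, mul_one]

theorem replacementNum_mul_mul (hF : F * F = 1) (hS : S * S = 1)
    (hZT : replacementDen k F S * T = 1) (hTZ : T * replacementDen k F S = 1) :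
    replacementNum k F S * T * F = 1 + F - replacementNum k F S * T := by
  have hTF : Commute T F := Commute.units_inv_left (u := ⟨_, T, hZT, hTZ⟩)
    (commute_replacementDen_left hF hS)
  rw [mul_assoc, hTF.eq, ← mul_assoc, replacementNum_mul hF hS, sub_mul, add_mul, hZT,
    mul_assoc, hZT, mul_one]

theorem replacementNum_mul_mul_self (hF : F * F = 1) (hS : S * S = 1)
    (hZT : replacementDen k F S * T = 1) (hTZ : T * replacementDen k F S = 1) :
    replacementNum k F S * T * (replacementNum k F S * T) = 1 := by
  have hTN : Commute T (replacementNum k F S) := Commute.units_inv_left (u := ⟨_, T, hZT, hTZ⟩)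
    (commute_replacementDen_num hF hS)
  calc replacementNum k F S * T * (replacementNum k F S * T)
      = replacementNum k F S * replacementNum k F S * (T * T) := by
        rw [mul_assoc, ← mul_assoc T, hTN.eq]; noncomm_ring
    _ = 1 := by
        rw [replacementNum_mul_self hF hS, mul_assoc, ← mul_assoc _ T, hZT, one_mul, hZT]

end Replacement

omit [StarModule ℂ R] in
theorem tildeF_eq_self_of_star_eq {F T : R} (hsa : star F = F)
    (hT1 : (1 + (1 / 4 : ℂ) • ((F - star F) * (star F - F))) * T = 1) : tildeF F T = F := by
  rw [hsa, sub_self, zero_mul, smul_zero, add_zero, one_mul] at hT1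
  rw [tildeF, hT1, hsa, sub_self, smul_zero, zero_add, mul_one, ← two_smul ℂ F, smul_smul]
  norm_num

omit [StarModule ℂ R] in
theorem pathF_eq_sub_smul {F T : R} (hFD : F * (F - tildeF F T) = F - tildeF F T)
    (hDF : (F - tildeF F T) * F = -(F - tildeF F T))
    (hD : (F - tildeF F T) * (F - tildeF F T) = 0) (t : ℝ) :
    pathF F T t = F - (t : ℂ) • (F - tildeF F T) := by
  rw [pathF, ← neg_sub F, smul_neg, ← sub_eq_add_neg, one_add_smul_mul_mul_one_sub_smul hFD hDF hD,
    mul_div_cancel₀ _ two_ne_zero]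

/-- In a unital involutive algebra, if F² = 1 and 1 + ¼(F−F*)(F*−F) is
invertible with inverse T, then the path F_t satisfies F_t² = 1 for all t, F_0 = F,
F_1 = F̃, and F_t = F for all t whenever F is selfadjoint. -/
theorem pathF_involution (F T : R) (hF : F * F = 1)
    (hT1 : (1 + (1 / 4 : ℂ) • ((F - star F) * (star F - F))) * T = 1)
    (hT2 : T * (1 + (1 / 4 : ℂ) • ((F - star F) * (star F - F))) = 1) :
    (∀ t : ℝ, pathF F T t * pathF F T t = 1) ∧
      pathF F T 0 = F ∧
      pathF F T 1 = tildeF F T ∧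
      (star F = F → ∀ t : ℝ, pathF F T t = F) := by
  have hS : star F * star F = 1 := by rw [← star_mul, hF, star_one]
  have hFG : F * tildeF F T = 1 - F + tildeF F T := mul_replacementNum_mul hF hS hT1
  have hGF : tildeF F T * F = 1 + F - tildeF F T := replacementNum_mul_mul hF hS hT1 hT2
  have hG : tildeF F T * tildeF F T = 1 := replacementNum_mul_mul_self hF hS hT1 hT2
  have hFD := mul_sub_of_mul_eq hF hFG
  have hDF := sub_mul_of_mul_eq hF hGF
  have hD := sub_mul_self_of_mul_eq hF hG hFG hGF
  refine ⟨fun t => ?_, ?_, ?_, fun hsa t => ?_⟩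
  · rw [pathF_eq_sub_smul hFD hDF hD]
    exact sub_smul_mul_self_eq_one hF hFD hDF hD _
  · rw [pathF_eq_sub_smul hFD hDF hD, Complex.ofReal_zero, zero_smul, sub_zero]
  · rw [pathF_eq_sub_smul hFD hDF hD, Complex.ofReal_one, one_smul, sub_sub_cancel]
  · rw [pathF_eq_sub_smul hFD hDF hD, tildeF_eq_self_of_star_eq hsa hT1, sub_self, smul_zero,
      sub_zero]
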